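/- arXiv:1904.05654 — 2 statements merged into one kernel-verified Lean document; each statement's English description precedes it below -/
import Mathlib

section
/- Let ρ ∈ (0,1) and j ≥ 0 an integer. Then ∑_{n=0}^∞ (1−ρ)ρ^n ∑_{m=0}^{2j+n} p(2j+n−m, n, m)/((m+1)(1+ρ)) = ∑_{n=0}^∞ (1−ρ)ρ^n ∑_{m=max(n−2j,0)}^∞ p(2j+m−n, n, m)/((m+1)(1+ρ)), all series converging. In words: for a tagged customer entering the stationary M/M/1-PS queue, the number α of arrivals during its sojourn and the number δ of departures during its sojourn are equal in distribution. -/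
open MeasureTheory Filter Topology

/-- Pollaczek polynomials with parameters a = 1, b = 0. -/
noncomputable def pol : ℕ → ℝ → ℝ
  | 0, _ => 1
  | 1, x => 2 * x
  | (n+2), x => (2 * ((n:ℝ) + 2) * x * pol (n+1) x - ((n:ℝ) + 1) * pol n x) / ((n:ℝ) + 2)

/-- Rescaled polynomials `Q_n(x) = ρ^{-n/2} P_n((1+ρ)x/(2√ρ))`. -/
noncomputable def Q (ρ : ℝ) (n : ℕ) (x : ℝ) : ℝ :=
  pol n ((1 + ρ) * x / (2 * Real.sqrt ρ)) / (Real.sqrt ρ) ^ n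

/-- `x_ρ(θ) = (2√ρ/(1+ρ)) cos θ`. -/
noncomputable def X (ρ θ : ℝ) : ℝ := (2 * Real.sqrt ρ / (1 + ρ)) * Real.cos θ

/-- Density of the spectral measure in the variable θ. -/
noncomputable def W (θ : ℝ) : ℝ :=
  (Real.sin θ / Real.cosh (Real.pi * (Real.cos θ / Real.sin θ) / 2)) *
    Real.exp ((θ - Real.pi / 2) * (Real.cos θ / Real.sin θ))

/-- `G_ρ(θ) = 𝒫(θ, √ρ) = ∑ ρ^m Q_m(x_ρ(θ))`. -/
noncomputable def G (ρ θ : ℝ) : ℝ :=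
  (1 - 2 * Real.sqrt ρ * Real.cos θ + ρ) ^ (-(1:ℝ)/2) *
    Real.exp ((Real.cos θ / Real.sin θ) *
      Real.arctan (Real.sqrt ρ * Real.sin θ / (1 - Real.sqrt ρ * Real.cos θ)))

/-- Powers of the sub-stochastic tridiagonal matrix `A` of the absorbed M/M/1-PS chain. -/
noncomputable def ker (ρ : ℝ) : ℕ → ℕ → ℕ → ℝ
  | 0, n, m => if n = m then 1 else 0
  | (k+1), 0, m => (ρ / (1 + ρ)) * ker ρ k 1 m
  | (k+1), (n+1), m => (ρ / (1 + ρ)) * ker ρ k (n+2) m +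
      (((n:ℝ) + 1) / (((n:ℝ) + 2) * (1 + ρ))) * ker ρ k n m

/-!
The chain observed until the tagged customer leaves is a birth–death chain: from `n` customers
it moves up with probability `ρ / (1 + ρ)` and down with probability `n / ((n + 1) (1 + ρ))`.
It is reversible with respect to `π n = (n + 1) ρ ^ n`, so `π n p(k, n, m) = π m p(k, m, n)`.
This turns the weight `ρ ^ n p(2j + n - m, n, m) / (m + 1)` of the pair (start `n`, end `m`)
in `P(α = j)` into the weight of the pair (start `m`, end `n`) in `P(δ = j)`: the two double
series are rearrangements of each other. Both converge absolutely, because the weighted term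
of a pair `(n, m)` is at most `(1 - ρ) ρ ^ max n m`.
-/

namespace BirthDeath

/-- `leftMul b d f` and `rightMul b d f` are the products `A f` and `f A` with the tridiagonal
matrix `A` whose row `n` carries `b n` in column `n + 1` and `d n` in column `n - 1`. -/
def leftMul (b d : ℕ → ℝ) (f : ℕ → ℕ → ℝ) : ℕ → ℕ → ℝ
  | 0, m => b 0 * f 1 m
  | n + 1, m => b (n + 1) * f (n + 2) m + d (n + 1) * f n m

def rightMul (b d : ℕ → ℝ) (f : ℕ → ℕ → ℝ) : ℕ → ℕ → ℝ
  | n, 0 => f n 1 * d 1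
  | n, m + 1 => f n m * b m + f n (m + 2) * d (m + 2)

def pow (b d : ℕ → ℝ) (k : ℕ) : ℕ → ℕ → ℝ :=
  (leftMul b d)^[k] fun n m => if n = m then 1 else 0

variable {b d : ℕ → ℝ}

lemma leftMul_rightMul (f : ℕ → ℕ → ℝ) :
    leftMul b d (rightMul b d f) = rightMul b d (leftMul b d f) := by
  funext n m
  rcases n with _ | n <;> rcases m with _ | m <;> simp only [leftMul, rightMul] <;> ring

lemma leftMul_one_eq_rightMul_one :
    leftMul b d (fun n m => if n = m then 1 else 0) =
      rightMul b d (fun n m => if n = m then 1 else 0) := by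
  funext n m
  rcases n with _ | n <;> rcases m with _ | m <;> simp only [leftMul, rightMul] <;>
    split_ifs <;> simp_all
  omega

lemma pow_succ_eq_leftMul (k : ℕ) : pow b d (k + 1) = leftMul b d (pow b d k) :=
  Function.iterate_succ_apply' _ _ _

lemma pow_succ_eq_rightMul (k : ℕ) : pow b d (k + 1) = rightMul b d (pow b d k) := by
  induction k with
  | zero => exact leftMul_one_eq_rightMul_one
  | succ k ih =>
    rw [pow_succ_eq_leftMul, ih, leftMul_rightMul, ← pow_succ_eq_leftMul, ih]

theorem pow_reversible {π : ℕ → ℝ} (hπ : ∀ n, π (n + 1) * d (n + 1) = π n * b n)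
    (k n m : ℕ) : π n * pow b d k n m = π m * pow b d k m n := by
  induction k generalizing n m with
  | zero => by_cases h : n = m <;> simp [pow, h, eq_comm]
  | succ k ih =>
    conv_lhs => rw [pow_succ_eq_leftMul]
    conv_rhs => rw [pow_succ_eq_rightMul]
    rcases n with _ | n
    · simp only [leftMul, rightMul]
      linear_combination d 1 * ih 1 m - pow b d k 1 m * (hπ 0 : π 1 * d 1 = π 0 * b 0)
    · simp only [leftMul, rightMul]
      linear_combination d (n + 2) * ih (n + 2) m + b n * ih n m
        - pow b d k (n + 2) m * hπ (n + 1) + pow b d k n m * hπ n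

lemma pow_nonneg (hb : ∀ n, 0 ≤ b n) (hd : ∀ n, 0 ≤ d n) (k n m : ℕ) : 0 ≤ pow b d k n m := by
  induction k generalizing n m with
  | zero => simp only [pow, Function.iterate_zero, id]; positivity
  | succ k ih =>
    rw [pow_succ_eq_leftMul]
    rcases n with _ | n
    · exact mul_nonneg (hb 0) (ih 1 m)
    · exact add_nonneg (mul_nonneg (hb _) (ih _ m)) (mul_nonneg (hd _) (ih n m))

lemma pow_le_one (hb : ∀ n, 0 ≤ b n) (hd : ∀ n, 0 ≤ d n) (hbd : ∀ n, b n + d n ≤ 1)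
    (k n m : ℕ) : pow b d k n m ≤ 1 := by
  induction k generalizing n m with
  | zero => simp only [pow, Function.iterate_zero, id]; split_ifs <;> norm_num
  | succ k ih =>
    rw [pow_succ_eq_leftMul]
    rcases n with _ | n
    · calc b 0 * pow b d k 1 m ≤ b 0 * 1 := by gcongr; exacts [hb 0, ih 1 m]
        _ ≤ 1 := by linarith [hbd 0, hd 0]
    · calc b (n + 1) * pow b d k (n + 2) m + d (n + 1) * pow b d k n m
          ≤ b (n + 1) * 1 + d (n + 1) * 1 := by
            gcongr
            exacts [hb _, ih _ m, hd _, ih n m]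
        _ ≤ 1 := by linarith [hbd (n + 1)]

end BirthDeath

lemma ker_eq_birthDeath_pow (ρ : ℝ) :
    ker ρ = BirthDeath.pow (fun _ => ρ / (1 + ρ)) (fun n => n / ((n + 1) * (1 + ρ))) := by
  funext k n m
  induction k generalizing n m with
  | zero => rfl
  | succ k ih =>
    rw [BirthDeath.pow_succ_eq_leftMul]
    rcases n with _ | n
    · simp only [_root_.ker, BirthDeath.leftMul, ih]
    · simp only [_root_.ker, BirthDeath.leftMul, ih]
      push_cast
      ring

lemma ker_reversible (ρ : ℝ) (k n m : ℕ) :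
    ((n : ℝ) + 1) * ρ ^ n * ker ρ k n m = ((m : ℝ) + 1) * ρ ^ m * ker ρ k m n := by
  rw [ker_eq_birthDeath_pow]
  refine BirthDeath.pow_reversible (π := fun n => ((n : ℝ) + 1) * ρ ^ n) (fun n => ?_) k n m
  push_cast
  field_simp
  ring

lemma ker_nonneg {ρ : ℝ} (hρ : 0 ≤ ρ) (k n m : ℕ) : 0 ≤ ker ρ k n m := by
  rw [ker_eq_birthDeath_pow]
  exact BirthDeath.pow_nonneg (fun _ => by positivity) (fun _ => by positivity) k n m

lemma ker_le_one {ρ : ℝ} (hρ : 0 ≤ ρ) (k n m : ℕ) : ker ρ k n m ≤ 1 := by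
  rw [ker_eq_birthDeath_pow]
  refine BirthDeath.pow_le_one (fun _ => by positivity) (fun _ => by positivity) (fun n => ?_)
    k n m
  rw [div_add_div _ _ (by positivity) (by positivity), div_le_one (by positivity)]
  nlinarith

lemma ker_div_mem_Icc {ρ : ℝ} (hρ : 0 ≤ ρ) (k n m : ℕ) :
    ker ρ k n m / (((m : ℝ) + 1) * (1 + ρ)) ∈ Set.Icc 0 1 := by
  have hden : 1 ≤ ((m : ℝ) + 1) * (1 + ρ) := by nlinarith [(m.cast_nonneg : (0 : ℝ) ≤ m)]
  refine ⟨div_nonneg (ker_nonneg hρ k n m) (by linarith), ?_⟩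
  rw [div_le_one (by linarith)]
  linarith [ker_le_one hρ k n m]

lemma summable_of_le_geometric_fst_snd {f : ℕ × ℕ → ℝ} {c r : ℝ} (hr0 : 0 ≤ r) (hr1 : r < 1)
    (hf : ∀ p, 0 ≤ f p) (h₁ : ∀ p, f p ≤ c * r ^ p.1) (h₂ : ∀ p, f p ≤ c * r ^ p.2) :
    Summable f := by
  have hs0 : 0 ≤ √r := Real.sqrt_nonneg r
  have hs1 : √r < 1 := (Real.sqrt_lt' one_pos).2 (by rwa [one_pow])
  have hc : 0 ≤ c := by simpa using (hf (0, 0)).trans (h₁ (0, 0))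
  have hgeom := summable_geometric_of_lt_one hs0 hs1
  refine Summable.of_nonneg_of_le hf (fun p => ?_)
    ((hgeom.mul_of_nonneg hgeom (fun _ => by positivity) (fun _ => by positivity)).mul_left c)
  have hmax : f p ≤ c * r ^ max p.1 p.2 := by
    rcases max_choice p.1 p.2 with h | h <;> rw [h]
    exacts [h₁ p, h₂ p]
  calc f p ≤ c * r ^ max p.1 p.2 := hmax
    _ = c * √r ^ (2 * max p.1 p.2) := by rw [pow_mul, Real.sq_sqrt hr0]
    _ ≤ c * √r ^ (p.1 + p.2) := by
      gcongr c * ?_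
      exact pow_le_pow_of_le_one hs0 hs1.le (by omega)
    _ = c * (√r ^ p.1 * √r ^ p.2) := by rw [pow_add]

section Sojourn

variable (ρ : ℝ) (j : ℕ)

/-- `arrivalsTerm ρ j n m` and `departuresTerm ρ j n m` are the `m`-th summands of
`P(α = j | N₀ = n)` and `P(δ = j | N₀ = n)`. -/
noncomputable def arrivalsTerm (n m : ℕ) : ℝ :=
  if m ≤ 2 * j + n then ker ρ (2 * j + n - m) n m / (((m : ℝ) + 1) * (1 + ρ)) else 0

noncomputable def departuresTerm (n m : ℕ) : ℝ :=
  if n ≤ 2 * j + m then ker ρ (2 * j + m - n) n m / (((m : ℝ) + 1) * (1 + ρ)) else 0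

lemma tsum_arrivalsTerm (n : ℕ) :
    ∑' m, arrivalsTerm ρ j n m = ∑ m ∈ Finset.range (2 * j + n + 1),
      ker ρ (2 * j + n - m) n m / (((m : ℝ) + 1) * (1 + ρ)) := by
  rw [tsum_eq_sum (s := Finset.range (2 * j + n + 1))]
  · refine Finset.sum_congr rfl fun m hm => if_pos ?_
    rw [Finset.mem_range] at hm
    omega
  · intro m hm
    rw [Finset.mem_range] at hm
    exact if_neg (by omega)

lemma pow_mul_arrivalsTerm (n m : ℕ) :
    ρ ^ n * arrivalsTerm ρ j n m = ρ ^ m * departuresTerm ρ j m n := by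
  unfold arrivalsTerm departuresTerm
  split_ifs
  · have h := ker_reversible ρ (2 * j + n - m) n m
    field_simp
    linear_combination (1 + ρ)⁻¹ * h
  · simp

variable {ρ}

lemma arrivalsTerm_mem_Icc (hρ : 0 ≤ ρ) (n m : ℕ) : arrivalsTerm ρ j n m ∈ Set.Icc 0 1 := by
  unfold arrivalsTerm
  split_ifs
  exacts [ker_div_mem_Icc hρ _ _ _, ⟨le_rfl, zero_le_one⟩]

lemma departuresTerm_mem_Icc (hρ : 0 ≤ ρ) (n m : ℕ) : departuresTerm ρ j n m ∈ Set.Icc 0 1 := by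
  unfold departuresTerm
  split_ifs
  exacts [ker_div_mem_Icc hρ _ _ _, ⟨le_rfl, zero_le_one⟩]

lemma summable_departuresTerm (hρ0 : 0 ≤ ρ) (hρ1 : ρ < 1) :
    Summable fun p : ℕ × ℕ => (1 - ρ) * ρ ^ p.1 * departuresTerm ρ j p.1 p.2 := by
  have h1ρ : 0 ≤ 1 - ρ := by linarith
  refine summable_of_le_geometric_fst_snd (c := 1 - ρ) hρ0 hρ1 (fun p => ?_) (fun p => ?_)
    (fun p => ?_)
  · have hδ0 := (departuresTerm_mem_Icc j hρ0 p.1 p.2).1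
    positivity
  · have hδ1 := (departuresTerm_mem_Icc j hρ0 p.1 p.2).2
    calc (1 - ρ) * ρ ^ p.1 * departuresTerm ρ j p.1 p.2 ≤ (1 - ρ) * ρ ^ p.1 * 1 := by gcongr
      _ = (1 - ρ) * ρ ^ p.1 := mul_one _
  · have hα1 := (arrivalsTerm_mem_Icc j hρ0 p.2 p.1).2
    calc (1 - ρ) * ρ ^ p.1 * departuresTerm ρ j p.1 p.2
        = (1 - ρ) * (ρ ^ p.2 * arrivalsTerm ρ j p.2 p.1) := by
          rw [pow_mul_arrivalsTerm, mul_assoc]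
      _ ≤ (1 - ρ) * (ρ ^ p.2 * 1) := by gcongr
      _ = (1 - ρ) * ρ ^ p.2 := by rw [mul_one]

end Sojourn

/-- In the stationary regime, the numbers α of arrivals and δ of departures during
the tagged sojourn are equal in distribution. -/
theorem stmt12 (ρ : ℝ) (hρ : ρ ∈ Set.Ioo (0:ℝ) 1) (j : ℕ) :
    (∀ n : ℕ, Summable (fun m : ℕ =>
      if n ≤ 2*j + m then ker ρ (2*j + m - n) n m / (((m:ℝ) + 1) * (1 + ρ)) else 0)) ∧
    Summable (fun n : ℕ => (1 - ρ) * ρ ^ n *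
      ∑ m ∈ Finset.range (2*j + n + 1), ker ρ (2*j + n - m) n m / (((m:ℝ) + 1) * (1 + ρ))) ∧
    Summable (fun n : ℕ => (1 - ρ) * ρ ^ n * ∑' m : ℕ,
      if n ≤ 2*j + m then ker ρ (2*j + m - n) n m / (((m:ℝ) + 1) * (1 + ρ)) else 0) ∧
    ∑' n : ℕ, (1 - ρ) * ρ ^ n *
        ∑ m ∈ Finset.range (2*j + n + 1), ker ρ (2*j + n - m) n m / (((m:ℝ) + 1) * (1 + ρ)) =
      ∑' n : ℕ, (1 - ρ) * ρ ^ n * ∑' m : ℕ,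
        if n ≤ 2*j + m then ker ρ (2*j + m - n) n m / (((m:ℝ) + 1) * (1 + ρ)) else 0 := by
  obtain ⟨hρ0, hρ1⟩ := hρ
  have hδ := summable_departuresTerm j hρ0.le hρ1
  have hα : Summable fun p : ℕ × ℕ => (1 - ρ) * ρ ^ p.1 * arrivalsTerm ρ j p.1 p.2 := by
    simpa only [Prod.fst_swap, Prod.snd_swap, mul_assoc, pow_mul_arrivalsTerm] using
      hδ.prod_symm
  have hα_sum (n : ℕ) : (1 - ρ) * ρ ^ n * ∑ m ∈ Finset.range (2 * j + n + 1),
      ker ρ (2 * j + n - m) n m / (((m : ℝ) + 1) * (1 + ρ)) =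
      ∑' m, (1 - ρ) * ρ ^ n * arrivalsTerm ρ j n m := by
    rw [tsum_mul_left, tsum_arrivalsTerm]
  refine ⟨fun n => ?_, ?_, ?_, ?_⟩
  · have hne : (1 - ρ) * ρ ^ n ≠ 0 := mul_ne_zero (by linarith) (pow_ne_zero _ hρ0.ne')
    exact (summable_mul_left_iff hne).mp (hδ.prod_factor n)
  · simpa only [hα_sum] using hα.prod
  · simpa only [tsum_mul_left, departuresTerm] using hδ.prod
  · simp only [hα_sum, ← tsum_mul_left]
    simpa only [mul_assoc, pow_mul_arrivalsTerm, departuresTerm] using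
      Summable.tsum_comm (f := fun n m => (1 - ρ) * ρ ^ n * departuresTerm ρ j n m) hδ
end

section
/- Let ρ ∈ (0,1), let c_k = ((1−ρ)/(ρ(1+ρ))) ∑_{i=k}^∞ binom(2i,i) ρ^i / ((i+1)(1+ρ)^{2i}), and define b̃_j = ∑_{k=j+1}^∞ c_k / k for j ≥ 0. Then, as j → ∞, b̃_j / [ (4(1+ρ)/((1−ρ)³ √π)) · j^{−5/2} · (4ρ/(1+ρ)²)^j ] → 1. -/
open MeasureTheory Filter Topology

/-- Distribution of the number of customers served in the residual busy period. -/
noncomputable def resBusy (ρ : ℝ) (ℓ : ℕ) : ℝ :=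
  ((1 - ρ) / (ρ * (1 + ρ))) * ∑' k : ℕ,
    (Nat.choose (2*(k + ℓ)) (k + ℓ) : ℝ) * ρ ^ (k + ℓ) /
      (((k:ℝ) + (ℓ:ℝ) + 1) * (1 + ρ) ^ (2*(k + ℓ)))

/-- `b̃_j = ∑_{k>j} P(b = k)/k`: the number of customers served before a uniformly
picked customer of the residual busy period. -/
noncomputable def btilde (ρ : ℝ) (j : ℕ) : ℝ :=
  ∑' k : ℕ, resBusy ρ (k + j + 1) / ((k:ℝ) + (j:ℝ) + 1)

/-!
The generating function of the `c_k` is explicit: `c_ℓ` is a constant `C` times the tail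
`∑_{m ≥ ℓ} Cat_m x^m` of the Catalan series at `x = ρ/(1+ρ)²`, and Stirling's formula gives
`Cat_m x^m ∼ m^{-3/2} r^m / √π` with `r = 4x < 1`. For a sequence `a_n ∼ L g_n` whose scale
satisfies `g_{n+1}/g_n → r < 1`, dominated convergence gives `∑_{k ≥ n} a_k ∼ L g_n / (1 - r)`.
Applying this to `c_ℓ`, then to `c_k/k ∼ C k^{-5/2} r^k / (√π (1-r))`, and shifting the index by
one (a factor `r`) yields the constant `C r / (√π (1-r)²) = 4(1+ρ) / ((1-ρ)³ √π)`.
-/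

open Filter Topology Real

theorem centralBinom_mul_sqrt_div_four_pow_eq {n : ℕ} (hn : n ≠ 0) :
    (n.centralBinom : ℝ) * √n / 4 ^ n =
      Stirling.stirlingSeq (2 * n) / Stirling.stirlingSeq n ^ 2 := by
  have hfact : ((2 * n).factorial : ℝ) = n.centralBinom * n.factorial ^ 2 := by
    rw [← Nat.choose_mul_factorial_mul_factorial (by omega : n ≤ 2 * n),
      show 2 * n - n = n by omega, Nat.centralBinom_eq_two_mul_choose]
    push_cast; ring
  have hsqrt : √(2 * ((2 * n : ℕ) : ℝ)) = 2 * √n := by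
    rw [show 2 * ((2 * n : ℕ) : ℝ) = 2 ^ 2 * n by push_cast; ring, sqrt_mul (by positivity),
      sqrt_sq zero_le_two]
  have hpow : (((2 * n : ℕ) : ℝ) / exp 1) ^ (2 * n) = 4 ^ n * ((n / exp 1) ^ n) ^ 2 := by
    rw [show ((2 * n : ℕ) : ℝ) / exp 1 = 2 * (n / exp 1) by push_cast; ring, mul_pow, pow_mul,
      pow_mul]
    ring
  have hn0 : (0 : ℝ) < n := by positivity
  simp only [Stirling.stirlingSeq, hfact, hsqrt, hpow, div_pow, mul_pow,
    sq_sqrt (by positivity : (0 : ℝ) ≤ 2 * n)]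
  field_simp
  rw [sq_sqrt n.cast_nonneg]

theorem tendsto_centralBinom_mul_sqrt_div_four_pow :
    Tendsto (fun n : ℕ ↦ (n.centralBinom : ℝ) * √n / 4 ^ n) atTop (𝓝 (1 / √π)) := by
  have h2n : Tendsto (fun n : ℕ ↦ Stirling.stirlingSeq (2 * n)) atTop (𝓝 √π) :=
    Stirling.tendsto_stirlingSeq_sqrt_pi.comp (tendsto_id.const_mul_atTop' two_pos)
  have hlim := h2n.div (Stirling.tendsto_stirlingSeq_sqrt_pi.pow 2) (by positivity)
  rw [sq_sqrt pi_pos.le, sqrt_div_self'] at hlim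
  refine hlim.congr' ?_
  filter_upwards [eventually_ne_atTop 0] with n hn
  exact (centralBinom_mul_sqrt_div_four_pow_eq hn).symm

theorem tendsto_catalan_div_four_pow_mul_rpow :
    Tendsto (fun n : ℕ ↦ (catalan n : ℝ) / ((n : ℝ) ^ (-(3 / 2 : ℝ)) * 4 ^ n)) atTop
      (𝓝 (1 / √π)) := by
  have hlim := tendsto_centralBinom_mul_sqrt_div_four_pow.mul
    (tendsto_natCast_div_add_atTop (1 : ℝ))
  rw [mul_one] at hlim
  refine hlim.congr' ?_
  filter_upwards [eventually_ne_atTop 0] with n hn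
  have hn0 : (0 : ℝ) < n := by positivity
  have hcat : (n.centralBinom : ℝ) = (n + 1) * catalan n := by
    exact_mod_cast (succ_mul_catalan_eq_centralBinom n).symm
  rw [rpow_neg hn0.le, show (3 / 2 : ℝ) = 1 + 1 / 2 by norm_num, rpow_add hn0, rpow_one,
    ← sqrt_eq_rpow, hcat]
  field_simp

section Tail

variable {a g : ℕ → ℝ} {r L : ℝ}

theorem tendsto_add_div_of_tendsto_succ_div (hg : ∀ᶠ n in atTop, g n ≠ 0)
    (hgr : Tendsto (fun n ↦ g (n + 1) / g n) atTop (𝓝 r)) (i : ℕ) :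
    Tendsto (fun n ↦ g (i + n) / g n) atTop (𝓝 (r ^ i)) := by
  induction i with
  | zero =>
    refine tendsto_const_nhds.congr' ?_
    filter_upwards [hg] with n hn
    simp [hn]
  | succ i ih =>
    have hshift := (hgr.comp (tendsto_add_atTop_nat i)).mul ih
    rw [← pow_succ'] at hshift
    refine hshift.congr' ?_
    filter_upwards [hg, tendsto_add_atTop_nat i |>.eventually hg] with n hn hin
    simp only [Function.comp_apply] at hin ⊢
    rw [add_comm n i] at hin
    rw [add_comm n i, add_right_comm, div_mul_div_cancel₀ hin]

theorem eventually_add_le_pow_mul (hg : ∀ᶠ n in atTop, 0 < g n) {s : ℝ}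
    (hgs : ∀ᶠ n in atTop, g (n + 1) / g n < s) :
    ∀ᶠ n in atTop, ∀ i, g (i + n) ≤ s ^ i * g n := by
  obtain ⟨N, hN⟩ := eventually_atTop.mp (hg.and hgs)
  filter_upwards [eventually_ge_atTop N] with n hn i
  induction i with
  | zero => simp
  | succ i ih =>
    obtain ⟨hpos, hlt⟩ := hN (i + n) (by omega)
    rw [div_lt_iff₀ hpos] at hlt
    have hs : 0 ≤ s := by nlinarith [(hN (i + n + 1) (by omega)).1]
    calc g (i + 1 + n) = g (i + n + 1) := by rw [add_right_comm]
      _ ≤ s * g (i + n) := hlt.le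
      _ ≤ s * (s ^ i * g n) := by gcongr
      _ = s ^ (i + 1) * g n := by ring

theorem tendsto_tsum_add_div_of_tendsto_div (hr : r < 1) (hg : ∀ᶠ n in atTop, 0 < g n)
    (hgr : Tendsto (fun n ↦ g (n + 1) / g n) atTop (𝓝 r))
    (ha : Tendsto (fun n ↦ a n / g n) atTop (𝓝 L)) :
    Tendsto (fun n ↦ (∑' k, a (k + n)) / g n) atTop (𝓝 (L / (1 - r))) := by
  have hr0 : 0 ≤ r := ge_of_tendsto hgr <| by
    filter_upwards [hg, tendsto_add_atTop_nat 1 |>.eventually hg] with n hn hn1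
    positivity
  obtain ⟨s, hrs, hs1⟩ := exists_between hr
  have hlim : ∀ i, Tendsto (fun n ↦ a (i + n) / g n) atTop (𝓝 (L * r ^ i)) := by
    intro i
    refine ((ha.comp (tendsto_add_atTop_nat i)).mul
      (tendsto_add_div_of_tendsto_succ_div (hg.mono fun _ ↦ ne_of_gt) hgr i)).congr' ?_
    filter_upwards [tendsto_add_atTop_nat i |>.eventually hg] with n hn
    simp only [Function.comp_apply, add_comm n i] at hn ⊢
    exact div_mul_div_cancel₀ hn.ne'
  have hbound : ∀ᶠ n in atTop, ∀ i, ‖a (i + n) / g n‖ ≤ (|L| + 1) * s ^ i := by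
    have hbdd : ∀ᶠ n in atTop, ‖a n / g n‖ ≤ |L| + 1 :=
      ha.norm.eventually (ge_mem_nhds (by rw [Real.norm_eq_abs]; linarith))
    obtain ⟨N, hN⟩ := eventually_atTop.mp (hbdd.and hg)
    filter_upwards [eventually_ge_atTop N,
      eventually_add_le_pow_mul hg (hgr.eventually (gt_mem_nhds hrs))] with n hn hdecay i
    obtain ⟨hbdd, hpos⟩ := hN (i + n) (by omega)
    have hgn : 0 < g n := (hN n hn).2
    calc ‖a (i + n) / g n‖ = ‖a (i + n) / g (i + n)‖ * (g (i + n) / g n) := by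
          rw [norm_div, norm_div, Real.norm_of_nonneg hpos.le, Real.norm_of_nonneg hgn.le]
          field_simp
      _ ≤ (|L| + 1) * s ^ i :=
          mul_le_mul hbdd ((div_le_iff₀ hgn).2 (hdecay i)) (by positivity) (by positivity)
  have hsum := tendsto_tsum_of_dominated_convergence
    ((summable_geometric_of_lt_one (hr0.trans hrs.le) hs1).mul_left _) hlim hbound
  rw [tsum_mul_left, tsum_geometric_of_lt_one hr0 hr, ← div_eq_mul_inv] at hsum
  simpa only [tsum_div_const] using hsum

end Tail

theorem tendsto_rpow_neg_mul_pow_succ_div {r : ℝ} (p : ℝ) (hr : r ≠ 0) :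
    Tendsto (fun n : ℕ ↦ (((n + 1 : ℕ) : ℝ) ^ (-p) * r ^ (n + 1)) / ((n : ℝ) ^ (-p) * r ^ n))
      atTop (𝓝 r) := by
  have hlim := ((tendsto_natCast_div_add_atTop (1 : ℝ)).rpow_const (p := p)
    (Or.inl one_ne_zero)).mul_const r
  rw [one_rpow, one_mul] at hlim
  refine hlim.congr' ?_
  filter_upwards [eventually_ne_atTop 0] with n hn
  have hn0 : (0 : ℝ) < n := by positivity
  rw [div_rpow hn0.le (by positivity), rpow_neg hn0.le, rpow_neg (by positivity), pow_succ]
  push_cast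
  field_simp

theorem tendsto_tsum_add_div_rpow_neg_mul_pow {a : ℕ → ℝ} {r L p : ℝ} (hr0 : 0 < r)
    (hr1 : r < 1)
    (ha : Tendsto (fun n : ℕ ↦ a n / ((n : ℝ) ^ (-p) * r ^ n)) atTop (𝓝 L)) :
    Tendsto (fun n : ℕ ↦ (∑' k, a (k + n)) / ((n : ℝ) ^ (-p) * r ^ n)) atTop
      (𝓝 (L / (1 - r))) := by
  refine tendsto_tsum_add_div_of_tendsto_div hr1 ?_
    (tendsto_rpow_neg_mul_pow_succ_div p hr0.ne') ha
  filter_upwards [eventually_gt_atTop 0] with n hn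
  have hn0 : (0 : ℝ) < n := by positivity
  positivity

theorem four_mul_div_one_add_sq_lt_one {ρ : ℝ} (hρ : ρ ≠ 1) : 4 * ρ / (1 + ρ) ^ 2 < 1 := by
  rcases eq_or_ne (1 + ρ) 0 with h | h
  · simp [h]
  rw [div_lt_one (by positivity)]
  nlinarith [sq_pos_of_ne_zero (sub_ne_zero.2 hρ)]

theorem tendsto_catalan_mul_pow_div {x : ℝ} (hx : x ≠ 0) :
    Tendsto (fun n : ℕ ↦ catalan n * x ^ n / ((n : ℝ) ^ (-(3 / 2 : ℝ)) * (4 * x) ^ n)) atTop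
      (𝓝 (1 / √π)) := by
  refine tendsto_catalan_div_four_pow_mul_rpow.congr fun n ↦ ?_
  rw [mul_pow]
  field_simp

theorem resBusy_eq_tsum_catalan (ρ : ℝ) (ℓ : ℕ) :
    resBusy ρ ℓ =
      (1 - ρ) / (ρ * (1 + ρ)) * ∑' k : ℕ, catalan (k + ℓ) * (ρ / (1 + ρ) ^ 2) ^ (k + ℓ) := by
  rw [resBusy]
  congr 1
  refine tsum_congr fun k ↦ ?_
  have hcat : ((2 * (k + ℓ)).choose (k + ℓ) : ℝ) = (k + ℓ + 1) * catalan (k + ℓ) := by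
    exact_mod_cast (succ_mul_catalan_eq_centralBinom (k + ℓ)).symm
  rw [hcat, div_pow, ← pow_mul]
  field_simp

theorem tendsto_resBusy_div_self_div {ρ : ℝ} (hρ0 : 0 < ρ) (hρ1 : ρ ≠ 1) :
    Tendsto (fun n : ℕ ↦
        resBusy ρ n / n / ((n : ℝ) ^ (-(5 / 2 : ℝ)) * (4 * ρ / (1 + ρ) ^ 2) ^ n)) atTop
      (𝓝 ((1 - ρ) / (ρ * (1 + ρ)) * (1 / √π / (1 - 4 * ρ / (1 + ρ) ^ 2)))) := by
  have hcat := tendsto_catalan_mul_pow_div (x := ρ / (1 + ρ) ^ 2) (by positivity)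
  rw [← mul_div_assoc] at hcat
  have hres := (tendsto_tsum_add_div_rpow_neg_mul_pow (by positivity)
    (four_mul_div_one_add_sq_lt_one hρ1) hcat).const_mul ((1 - ρ) / (ρ * (1 + ρ)))
  refine hres.congr' ?_
  filter_upwards [eventually_ne_atTop 0] with n hn
  have hn0 : (0 : ℝ) < n := by positivity
  rw [resBusy_eq_tsum_catalan, show -(5 / 2 : ℝ) = -(3 / 2) - 1 by norm_num,
    rpow_sub_one hn0.ne']
  field_simp

theorem btilde_eq_tsum (ρ : ℝ) (j : ℕ) :
    btilde ρ j = ∑' k : ℕ, resBusy ρ (k + (j + 1)) / ((k + (j + 1) : ℕ) : ℝ) := by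
  simp only [btilde, ← add_assoc]
  push_cast
  rfl

/-- Asymptotics of `P(b̃ = j)` as j → ∞. -/
theorem stmt18 (ρ : ℝ) (hρ : ρ ∈ Set.Ioo (0:ℝ) 1) :
    Filter.Tendsto (fun j : ℕ =>
      btilde ρ j /
        ((4 * (1 + ρ) / ((1 - ρ) ^ 3 * Real.sqrt Real.pi)) * (j:ℝ) ^ (-(5:ℝ)/2) *
          (4 * ρ / (1 + ρ) ^ 2) ^ j))
      Filter.atTop (nhds 1) := by
  obtain ⟨hρ0, hρ1⟩ := hρ
  set r := 4 * ρ / (1 + ρ) ^ 2 with hr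
  have hr0 : 0 < r := by positivity
  have htail := tendsto_tsum_add_div_rpow_neg_mul_pow hr0 (four_mul_div_one_add_sq_lt_one hρ1.ne)
    (tendsto_resBusy_div_self_div hρ0 hρ1.ne)
  have hbtilde := (htail.comp (tendsto_add_atTop_nat 1)).mul
    (tendsto_rpow_neg_mul_pow_succ_div (5 / 2) hr0.ne')
  have hconst : (1 - ρ) / (ρ * (1 + ρ)) * (1 / √π / (1 - r)) / (1 - r) * r =
      4 * (1 + ρ) / ((1 - ρ) ^ 3 * √π) := by
    rw [show 1 - r = (1 - ρ) ^ 2 / (1 + ρ) ^ 2 by rw [hr]; field_simp; ring, hr]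
    field_simp
  rw [hconst] at hbtilde
  have hlim := hbtilde.div_const (4 * (1 + ρ) / ((1 - ρ) ^ 3 * √π))
  rw [div_self (by positivity)] at hlim
  refine hlim.congr' ?_
  filter_upwards [eventually_ne_atTop 0] with j hj
  have hj0 : (0 : ℝ) < j := by positivity
  rw [Function.comp_apply, div_mul_div_cancel₀ (by positivity), ← btilde_eq_tsum, div_div,
    neg_div]
  ring
end
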